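/- There do not exist real numbers a, b, c, d such that ((a z₁ + b z₂)² + (c z₁ + d z₂)²)² = z₁⁴ + z₂⁴ for all z₁, z₂ ∈ ℝ. -/

import Mathlib

/-!
Expanding, `(a z₁ + b z₂)² + (c z₁ + d z₂)²` is the binary quadratic form
`P z₁² + 2 R z₁ z₂ + Q z₂²` with `P = a² + c²`, `Q = b² + d²`, `R = ab + cd`, and `P, Q ≥ 0`.
Evaluating the square of such a form at `(1, 0)` and `(0, 1)` forces `P = Q = 1`, and adding its values
at `(1, 1)` and `(1, -1)` gives `2 (P + Q)² + 8 R² = 4`, i.e. `8 R² = -4`.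
-/

theorem add_sq_linear_forms {R : Type*} [CommRing R] (a b c d z₁ z₂ : R) :
    (a * z₁ + b * z₂) ^ 2 + (c * z₁ + d * z₂) ^ 2 =
      (a ^ 2 + c ^ 2) * z₁ ^ 2 + 2 * (a * b + c * d) * z₁ * z₂ + (b ^ 2 + d ^ 2) * z₂ ^ 2 := by
  ring

theorem not_forall_sq_quadratic_eq_add_pow_four {K : Type*} [Field K] [LinearOrder K]
    [IsStrictOrderedRing K] {P Q R : K} (hP : 0 ≤ P) (hQ : 0 ≤ Q) :
    ¬ ∀ z₁ z₂ : K, (P * z₁ ^ 2 + 2 * R * z₁ * z₂ + Q * z₂ ^ 2) ^ 2 = z₁ ^ 4 + z₂ ^ 4 := by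
  intro h
  have hP1 : P = 1 := by nlinarith [h 1 0]
  have hQ1 : Q = 1 := by nlinarith [h 0 1]
  subst hP1 hQ1
  have hR : 8 * R ^ 2 = -4 := by linear_combination h 1 1 + h 1 (-1)
  linarith [sq_nonneg R]

theorem no_sum_of_two_squares_representation :
    ¬ ∃ a b c d : ℝ, ∀ z₁ z₂ : ℝ,
        ((a * z₁ + b * z₂) ^ 2 + (c * z₁ + d * z₂) ^ 2) ^ 2 = z₁ ^ 4 + z₂ ^ 4 := by
  rintro ⟨a, b, c, d, h⟩
  refine not_forall_sq_quadratic_eq_add_pow_four (R := a * b + c * d)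
    (add_nonneg (sq_nonneg a) (sq_nonneg c)) (add_nonneg (sq_nonneg b) (sq_nonneg d)) fun z₁ z₂ => ?_
  rw [← add_sq_linear_forms]
  exact h z₁ z₂
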